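/- Every non-generic super skew diagram λ/μ is related to a unique generic super skew diagram, where λ'/μ' is related to λ/μ if there is a finite chain of diagrams starting at λ/μ, ending at λ'/μ', each closely related to the previous one, and λ'/μ' is generic. -/

import Mathlib

/-- A skew diagram: a finite subset of `ℤ × ℤ_{>0}` such that if nonempty it meets column 1,
and satisfying the convexity condition. -/
def IsSkewDiagram (D : Finset (ℤ × ℤ)) : Prop :=
  (∀ p ∈ D, 1 ≤ p.2) ∧
  (D.Nonempty → ∃ i : ℤ, (i, 1) ∈ D) ∧
  (∀ i j : ℤ, (i, j) ∉ D →
    (∀ i' j' : ℤ, i ≤ i' → j ≤ j' → (i', j') ∉ D) ∨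
    (∀ i' j' : ℤ, i' ≤ i → j' ≤ j → (i', j') ∉ D))

/-- The number of rows shared by columns `j` and `j+1` of `D`. -/
def sharedCard (D : Finset (ℤ × ℤ)) (j : ℤ) : ℕ :=
  (D.filter (fun b => b.2 = j ∧ (b.1, j + 1) ∈ D)).card

/-- A super skew diagram: adjacent columns share at most `2N` rows. -/
def IsSuper (N : ℕ) (D : Finset (ℤ × ℤ)) : Prop := ∀ j : ℤ, sharedCard D j ≤ 2 * N

/-- A generic (super) skew diagram: adjacent columns share fewer than `2N` rows. -/
def IsGeneric (N : ℕ) (D : Finset (ℤ × ℤ)) : Prop := ∀ j : ℤ, sharedCard D j < 2 * N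

/-- The set of row indices of the boxes in column `j`. -/
def col (D : Finset (ℤ × ℤ)) (j : ℤ) : Finset ℤ := (D.filter (fun b => b.2 = j)).image Prod.fst

/-- The top box `t_j` of column `j` (junk value `0` if the column is empty). -/
def topBox (D : Finset (ℤ × ℤ)) (j : ℤ) : ℤ := (col D j).min.untopD 0

/-- The length `l_j` of column `j`. -/
def colLen (D : Finset (ℤ × ℤ)) (j : ℤ) : ℕ := (col D j).card

/-- The closely-related diagram `λ'/μ'`:
`{(i,j) ∈ D : j ≤ j'} ∪ {(t_{j'} - r, j') : 1 ≤ r ≤ l_{j'+1} - 2N + 1}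
∪ {(i-1, j-1) : (i,j) ∈ D, j > j'+1}`. -/
def surgery (N : ℕ) (D : Finset (ℤ × ℤ)) (j' : ℤ) : Finset (ℤ × ℤ) :=
  (D.filter (fun b => b.2 ≤ j')) ∪
    ((Finset.Icc 1 (colLen D (j' + 1) - 2 * N + 1)).image
      (fun r : ℕ => (topBox D j' - (r : ℤ), j'))) ∪
    ((D.filter (fun b => j' + 1 < b.2)).image (fun b => (b.1 - 1, b.2 - 1)))

/-- The finset of non-generic columns of `D`. -/
def nonGenCols (N : ℕ) (D : Finset (ℤ × ℤ)) : Finset ℤ :=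
  (D.image Prod.snd).filter (fun j => sharedCard D j = 2 * N)

/-- `E` is closely related to `D`: `E` is obtained from the super skew diagram `D` by the
surgery at the largest non-generic column `j'`. -/
def CloselyRelated (N : ℕ) (D E : Finset (ℤ × ℤ)) : Prop :=
  IsSkewDiagram D ∧ IsSuper N D ∧
  ∃ j' : ℤ, sharedCard D j' = 2 * N ∧ (∀ j : ℤ, j' < j → sharedCard D j < 2 * N) ∧
    E = surgery N D j'

/-!
Columns of a skew diagram are intervals of rows, and adjacent columns `j`, `j + 1` overlap in an
interval. If they share exactly `2N > 0` rows, the surgery at `j` turns column `j` into the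
interval from one row above the top of column `j + 1` down to the bottom of column `j`, and moves
the later columns one step up and to the left. The result is again a skew diagram; columns left
of `j` keep their overlaps, later overlaps are shifted copies of the old ones, and the new overlap
at `j` injects into the old one at `j + 1`, which is `< 2N` when `j` is the largest non-generic
column. Hence every step removes `j` from the non-generic columns and adds none, so chains
terminate. A diagram has at most one closely related successor, so all chains from `D` are
comparable, and a generic diagram has no successor: the generic endpoint is unique.
-/

open Finset Relation

section Columns

variable {D : Finset (ℤ × ℤ)} {i j k t b : ℤ}

lemma mem_col : i ∈ col D j ↔ (i, j) ∈ D := by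
  simp [col]

lemma sharedCard_eq_card_inter (D : Finset (ℤ × ℤ)) (j : ℤ) :
    sharedCard D j = #(col D j ∩ col D (j + 1)) := by
  rw [sharedCard, ← card_image_of_injOn (f := Prod.fst)]
  · congr 1
    ext i
    simp [mem_col]
  · rintro ⟨a, c⟩ ha ⟨a', c'⟩ ha' (rfl : a = a')
    simp only [coe_filter, Set.mem_ofPred_eq] at ha ha'
    rw [ha.2.1, ha'.2.1]

lemma isSkewDiagram_convex_iff_ordConnected :
    (∀ i j : ℤ, (i, j) ∉ D →
      (∀ i' j' : ℤ, i ≤ i' → j ≤ j' → (i', j') ∉ D) ∨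
      (∀ i' j' : ℤ, i' ≤ i → j' ≤ j → (i', j') ∉ D)) ↔ (D : Set (ℤ × ℤ)).OrdConnected := by
  constructor
  · refine fun h => ⟨?_⟩
    rintro ⟨i₁, j₁⟩ h₁ ⟨i₂, j₂⟩ h₂ ⟨i, j⟩ ⟨hp₁, hp₂⟩
    by_contra hp
    rcases h i j hp with h | h
    · exact h i₂ j₂ hp₂.1 hp₂.2 h₂
    · exact h i₁ j₁ hp₁.1 hp₁.2 h₁
  · intro h i j hp
    by_contra! hcon
    obtain ⟨⟨i₂, j₂, hi₂, hj₂, h₂⟩, i₁, j₁, hi₁, hj₁, h₁⟩ := hcon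
    exact hp (h.out h₁ h₂ ⟨⟨hi₁, hj₁⟩, ⟨hi₂, hj₂⟩⟩)

namespace IsSkewDiagram

variable (hD : IsSkewDiagram D)
include hD

lemma mem_of_le_of_le {i₁ j₁ i₂ j₂ : ℤ} (h₁ : (i₁, j₁) ∈ D) (h₂ : (i₂, j₂) ∈ D)
    (hi₁ : i₁ ≤ i) (hi₂ : i ≤ i₂) (hj₁ : j₁ ≤ j) (hj₂ : j ≤ j₂) : (i, j) ∈ D :=
  (isSkewDiagram_convex_iff_ordConnected.1 hD.2.2).out h₁ h₂ ⟨⟨hi₁, hj₁⟩, ⟨hi₂, hj₂⟩⟩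

lemma exists_col_eq_Icc (hne : (col D j).Nonempty) : ∃ t b, t ≤ b ∧ col D j = Icc t b := by
  refine ⟨_, _, min'_le_max' _ hne, ?_⟩
  ext i
  refine ⟨fun hi => mem_Icc.2 ⟨min'_le _ _ hi, le_max' _ _ hi⟩, fun hi => ?_⟩
  rw [mem_Icc] at hi
  exact mem_col.2 (hD.mem_of_le_of_le (mem_col.1 (min'_mem _ hne))
    (mem_col.1 (max'_mem _ hne)) hi.1 hi.2 le_rfl le_rfl)

lemma le_row_of_col_eq_Icc (hcol : col D j = Icc t b) (htb : t ≤ b) (hp : (i, k) ∈ D)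
    (hk : k ≤ j) : t ≤ i := by
  by_contra! hi
  have hb : (b, j) ∈ D := mem_col.1 (hcol ▸ mem_Icc.2 ⟨htb, le_rfl⟩)
  have := mem_col.2 (hD.mem_of_le_of_le hp hb le_rfl (by omega) hk le_rfl)
  rw [hcol, mem_Icc] at this
  omega

lemma row_le_of_col_eq_Icc (hcol : col D j = Icc t b) (htb : t ≤ b) (hp : (i, k) ∈ D)
    (hk : j ≤ k) : i ≤ b := by
  by_contra! hi
  have ht : (t, j) ∈ D := mem_col.1 (hcol ▸ mem_Icc.2 ⟨le_rfl, htb⟩)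
  have := mem_col.2 (hD.mem_of_le_of_le ht hp (by omega) le_rfl le_rfl hk)
  rw [hcol, mem_Icc] at this
  omega

lemma exists_adjacent_cols_eq_Icc (hpos : 0 < sharedCard D j) :
    ∃ t₀ b₀ t₁ b₁, col D j = Icc t₀ b₀ ∧ col D (j + 1) = Icc t₁ b₁ ∧
      t₁ ≤ t₀ ∧ t₀ ≤ b₁ ∧ b₁ ≤ b₀ ∧ (sharedCard D j : ℤ) = b₁ + 1 - t₀ := by
  rw [sharedCard_eq_card_inter] at hpos ⊢
  obtain ⟨i, hi⟩ := card_pos.1 hpos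
  obtain ⟨hi₀, hi₁⟩ := mem_inter.1 hi
  obtain ⟨t₀, b₀, htb₀, h₀⟩ := hD.exists_col_eq_Icc ⟨i, hi₀⟩
  obtain ⟨t₁, b₁, htb₁, h₁⟩ := hD.exists_col_eq_Icc ⟨i, hi₁⟩
  have ht : t₁ ≤ t₀ :=
    hD.le_row_of_col_eq_Icc h₁ htb₁ (mem_col.1 (h₀ ▸ mem_Icc.2 ⟨le_rfl, htb₀⟩)) (by omega)
  have hb : b₁ ≤ b₀ :=
    hD.row_le_of_col_eq_Icc h₀ htb₀ (mem_col.1 (h₁ ▸ mem_Icc.2 ⟨htb₁, le_rfl⟩)) (by omega)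
  rw [h₀, mem_Icc] at hi₀
  rw [h₁, mem_Icc] at hi₁
  refine ⟨t₀, b₀, t₁, b₁, h₀, h₁, ht, by omega, hb, ?_⟩
  rw [h₀, h₁, show Icc t₀ b₀ ∩ Icc t₁ b₁ = Icc t₀ b₁ by ext; simp only [mem_inter, mem_Icc]; omega,
    Int.card_Icc]
  omega

end IsSkewDiagram

end Columns

section Surgery

variable {N : ℕ} {D : Finset (ℤ × ℤ)} {i j k a b : ℤ}

lemma col_surgery_of_lt (hk : k < j) : col (surgery N D j) k = col D k := by
  ext i
  simp only [mem_col, surgery, mem_union, mem_filter, mem_image, Prod.mk.injEq]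
  constructor
  · rintro ((⟨h, -⟩ | ⟨r, -, -, rfl⟩) | ⟨⟨a, c⟩, ⟨-, hc⟩, -, rfl⟩)
    · exact h
    · exact absurd hk (lt_irrefl _)
    · dsimp only at hc; omega
  · exact fun h => Or.inl (Or.inl ⟨h, hk.le⟩)

lemma col_surgery_self : col (surgery N D j) j = col D j ∪
    Ico (topBox D j - ((colLen D (j + 1) - 2 * N + 1 : ℕ) : ℤ)) (topBox D j) := by
  ext i
  simp only [mem_col, surgery, mem_union, mem_filter, mem_image, mem_Icc, mem_Ico,
    Prod.mk.injEq, le_refl, and_true]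
  constructor
  · rintro ((h | ⟨r, hr, rfl⟩) | ⟨⟨a, c⟩, ⟨-, hc⟩, -, hc'⟩)
    · exact Or.inl h
    · exact Or.inr ⟨by omega, by omega⟩
    · dsimp only at hc hc'; omega
  · rintro (h | ⟨h₁, h₂⟩)
    · exact Or.inl (Or.inl h)
    · exact Or.inl (Or.inr ⟨(topBox D j - i).toNat, ⟨by omega, by omega⟩, by omega⟩)

lemma col_surgery_of_gt (hk : j < k) :
    col (surgery N D j) k = (col D (k + 1)).image (· - 1) := by
  ext i
  simp only [mem_col, surgery, mem_union, mem_filter, mem_image, Prod.mk.injEq]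
  constructor
  · rintro ((⟨-, h⟩ | ⟨r, -, -, rfl⟩) | ⟨⟨a, c⟩, ⟨h, -⟩, rfl, rfl⟩)
    · omega
    · exact absurd hk (lt_irrefl _)
    · exact ⟨a, by simpa using h, rfl⟩
  · rintro ⟨a, h, rfl⟩
    exact Or.inr ⟨(a, k + 1), ⟨h, by omega⟩, rfl, by simp⟩

lemma mem_surgery_iff_of_col_surgery_self (h : col (surgery N D j) j = Icc a b) :
    (i, k) ∈ surgery N D j ↔
      (k < j ∧ (i, k) ∈ D) ∨ (k = j ∧ a ≤ i ∧ i ≤ b) ∨ (j < k ∧ (i + 1, k + 1) ∈ D) := by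
  rw [← mem_col]
  rcases lt_trichotomy k j with hk | rfl | hk
  · simp [col_surgery_of_lt hk, mem_col, hk, hk.not_gt, hk.ne]
  · simp [h]
  · simp only [col_surgery_of_gt hk, mem_image, mem_col, hk, hk.not_gt, hk.ne', false_and,
      false_or, true_and]
    exact ⟨fun ⟨a, h, ha⟩ => by rwa [← ha, sub_add_cancel], fun h => ⟨i + 1, h, by ring⟩⟩

lemma sharedCard_surgery_of_gt (hk : j < k) :
    sharedCard (surgery N D j) k = sharedCard D (k + 1) := by
  have hinj : Function.Injective (· - 1 : ℤ → ℤ) := sub_left_injective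
  rw [sharedCard_eq_card_inter, sharedCard_eq_card_inter, col_surgery_of_gt hk,
    col_surgery_of_gt (by omega), ← image_inter _ _ hinj, card_image_of_injective _ hinj]

end Surgery

namespace IsSkewDiagram

variable {N : ℕ} {D : Finset (ℤ × ℤ)} {j k : ℤ} (hD : IsSkewDiagram D)
include hD

lemma exists_col_surgery_self_eq_Icc (hN : 0 < N) (hj : sharedCard D j = 2 * N) :
    ∃ t₀ b₀ t₁ b₁, col D j = Icc t₀ b₀ ∧ col D (j + 1) = Icc t₁ b₁ ∧
      t₁ ≤ t₀ ∧ t₀ ≤ b₁ ∧ b₁ ≤ b₀ ∧ col (surgery N D j) j = Icc (t₁ - 1) b₀ := by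
  obtain ⟨t₀, b₀, t₁, b₁, h₀, h₁, ht, htb, hb, hcard⟩ :=
    hD.exists_adjacent_cols_eq_Icc (j := j) (by omega)
  refine ⟨t₀, b₀, t₁, b₁, h₀, h₁, ht, htb, hb, ?_⟩
  have hne : (Icc t₀ b₀).Nonempty := nonempty_Icc.2 (by omega)
  have htop : topBox D j = t₀ := by
    rw [topBox, h₀, ← coe_min' hne, WithTop.untopD_coe]
    exact le_antisymm (min'_le _ _ (left_mem_Icc.2 (by omega)))
      (le_min' _ _ _ fun x hx => (mem_Icc.1 hx).1)
  have hlen : (colLen D (j + 1) : ℤ) = b₁ + 1 - t₁ := by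
    rw [colLen, h₁, Int.card_Icc]
    omega
  rw [col_surgery_self, htop, h₀]
  ext i
  simp only [mem_union, mem_Icc, mem_Ico]
  omega

lemma ordConnected_surgery (hN : 0 < N) (hj : sharedCard D j = 2 * N) :
    (surgery N D j : Set (ℤ × ℤ)).OrdConnected := by
  obtain ⟨t₀, b₀, t₁, b₁, h₀, h₁, ht, htb, hb, hE⟩ := hD.exists_col_surgery_self_eq_Icc hN hj
  have hb₀ : (b₀, j) ∈ D := mem_col.1 (h₀ ▸ mem_Icc.2 ⟨by omega, le_rfl⟩)
  have ht₁ : (t₁, j + 1) ∈ D := mem_col.1 (h₁ ▸ mem_Icc.2 ⟨le_rfl, by omega⟩)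
  refine ⟨?_⟩
  rintro ⟨i₁, k₁⟩ hp₁ ⟨i₂, k₂⟩ hp₂ ⟨i, k⟩ ⟨⟨hi₁, hk₁⟩, ⟨hi₂, hk₂⟩⟩
  simp only [mem_coe, mem_surgery_iff_of_col_surgery_self hE] at hp₁ hp₂ ⊢
  dsimp only at hi₁ hk₁ hi₂ hk₂
  rcases lt_trichotomy k j with hk | rfl | hk
  · refine Or.inl ⟨hk, ?_⟩
    obtain ⟨-, hd₁⟩ : k₁ < j ∧ (i₁, k₁) ∈ D := by
      rcases hp₁ with h | h | h
      · exact h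
      all_goals omega
    rcases hp₂ with ⟨-, hd₂⟩ | ⟨-, -, hib⟩ | ⟨-, hd₂⟩
    · exact hD.mem_of_le_of_le hd₁ hd₂ hi₁ hi₂ hk₁ hk₂
    · exact hD.mem_of_le_of_le hd₁ hb₀ hi₁ (hi₂.trans hib) hk₁ hk.le
    · exact hD.mem_of_le_of_le hd₁ hd₂ hi₁ (by omega) hk₁ (by omega)
  · refine Or.inr (Or.inl ⟨rfl, ?_, ?_⟩)
    · rcases hp₁ with ⟨hk, hp₁⟩ | ⟨-, h, -⟩ | ⟨hk, -⟩
      · have := hD.le_row_of_col_eq_Icc h₀ (by omega) hp₁ hk.le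
        omega
      all_goals omega
    · rcases hp₂ with ⟨hk, -⟩ | ⟨-, -, h⟩ | ⟨hk, hp₂⟩
      · omega
      · omega
      · have := hD.row_le_of_col_eq_Icc h₁ (by omega) hp₂ (by omega)
        omega
  · refine Or.inr (Or.inr ⟨hk, ?_⟩)
    obtain ⟨-, hd₂⟩ : j < k₂ ∧ (i₂ + 1, k₂ + 1) ∈ D := by
      rcases hp₂ with h | h | h
      · omega
      · omega
      · exact h
    rcases hp₁ with ⟨-, hd₁⟩ | ⟨-, h, -⟩ | ⟨-, hd₁⟩
    · exact hD.mem_of_le_of_le hd₁ hd₂ (by omega) (by omega) (by omega) (by omega)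
    · exact hD.mem_of_le_of_le ht₁ hd₂ (by omega) (by omega) (by omega) (by omega)
    · exact hD.mem_of_le_of_le hd₁ hd₂ (by omega) (by omega) (by omega) (by omega)

lemma isSkewDiagram_surgery (hN : 0 < N) (hj : sharedCard D j = 2 * N) :
    IsSkewDiagram (surgery N D j) := by
  obtain ⟨t₀, b₀, t₁, b₁, h₀, -, ht, htb, hb, hE⟩ := hD.exists_col_surgery_self_eq_Icc hN hj
  have hmem := fun {i k : ℤ} => mem_surgery_iff_of_col_surgery_self (i := i) (k := k) hE
  have ht₀ : (t₀, j) ∈ D := mem_col.1 (h₀ ▸ mem_Icc.2 ⟨le_rfl, by omega⟩)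
  have hj₁ : 1 ≤ j := hD.1 _ ht₀
  refine ⟨?_, fun _ => ?_, isSkewDiagram_convex_iff_ordConnected.2 (hD.ordConnected_surgery hN hj)⟩
  · rintro ⟨i, k⟩ hp
    rcases hmem.1 hp with ⟨-, hp⟩ | ⟨rfl, -⟩ | ⟨hk, -⟩
    · exact hD.1 _ hp
    all_goals dsimp only; omega
  · rcases hj₁.lt_or_eq with hj₁ | rfl
    · obtain ⟨i, hi⟩ := hD.2.1 ⟨_, ht₀⟩
      exact ⟨i, hmem.2 (Or.inl ⟨hj₁, hi⟩)⟩
    · exact ⟨t₀, hmem.2 (Or.inr (Or.inl ⟨rfl, by omega, by omega⟩))⟩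

lemma sharedCard_surgery_of_lt (hN : 0 < N) (hj : sharedCard D j = 2 * N) (hk : k < j) :
    sharedCard (surgery N D j) k = sharedCard D k := by
  obtain ⟨t₀, b₀, t₁, b₁, h₀, -, ht, htb, hb, hE⟩ := hD.exists_col_surgery_self_eq_Icc hN hj
  rw [sharedCard_eq_card_inter, sharedCard_eq_card_inter, col_surgery_of_lt hk]
  rcases (show k + 1 ≤ j by omega).lt_or_eq with hk' | hk'
  · rw [col_surgery_of_lt hk']
  · rw [hk', hE, h₀]
    congr 1
    ext i
    simp only [mem_inter, mem_Icc]
    constructor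
    · rintro ⟨hi, -, hib⟩
      exact ⟨hi, hD.le_row_of_col_eq_Icc h₀ (by omega) (mem_col.1 hi) (by omega), hib⟩
    · rintro ⟨hi, hti, hib⟩
      exact ⟨hi, by omega, hib⟩

lemma sharedCard_surgery_self_le (hN : 0 < N) (hj : sharedCard D j = 2 * N) :
    sharedCard (surgery N D j) j ≤ sharedCard D (j + 1) := by
  obtain ⟨t₀, b₀, t₁, b₁, -, h₁, ht, htb, hb, hE⟩ := hD.exists_col_surgery_self_eq_Icc hN hj
  rw [sharedCard_eq_card_inter, sharedCard_eq_card_inter, hE, col_surgery_of_gt (lt_add_one j)]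
  refine (card_le_card ?_).trans (card_image_le (f := (· - 1)))
  intro i
  simp only [mem_inter, mem_Icc, mem_image]
  rintro ⟨⟨hti, -⟩, a, ha, rfl⟩
  have hab := hD.row_le_of_col_eq_Icc h₁ (by omega) (mem_col.1 ha) (by omega)
  exact ⟨a, ⟨h₁ ▸ mem_Icc.2 ⟨by omega, hab⟩, ha⟩, rfl⟩

end IsSkewDiagram

section CloselyRelated

variable {N : ℕ} {D E : Finset (ℤ × ℤ)}

lemma mem_nonGenCols (hN : 0 < N) {j : ℤ} : j ∈ nonGenCols N D ↔ sharedCard D j = 2 * N := by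
  simp only [nonGenCols, mem_filter, mem_image, and_iff_right_iff_imp]
  intro hj
  have hpos : 0 < #(col D j ∩ col D (j + 1)) := by rw [← sharedCard_eq_card_inter]; omega
  obtain ⟨i, hi⟩ := card_pos.1 hpos
  exact ⟨(i, j), mem_col.1 (mem_inter.1 hi).1, rfl⟩

lemma closelyRelated_rightUnique : Relator.RightUnique (CloselyRelated N) := by
  rintro D _ _ ⟨-, -, j₁, hj₁, hmax₁, rfl⟩ ⟨-, -, j₂, hj₂, hmax₂, rfl⟩
  obtain rfl : j₁ = j₂ := by
    by_contra hne
    rcases Ne.lt_or_gt hne with h | h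
    · exact (hmax₁ j₂ h).ne hj₂
    · exact (hmax₂ j₁ h).ne hj₁
  rfl

lemma IsGeneric.not_closelyRelated (hg : IsGeneric N D) : ¬ CloselyRelated N D E := by
  rintro ⟨-, -, j, hj, -⟩
  exact (hg j).ne hj

lemma exists_closelyRelated (hN : 0 < N) (hD : IsSkewDiagram D) (hsuper : IsSuper N D)
    (hng : ¬ IsGeneric N D) : ∃ E, CloselyRelated N D E := by
  obtain ⟨j₀, hj₀⟩ := not_forall.1 hng
  have hne : (nonGenCols N D).Nonempty :=
    ⟨j₀, (mem_nonGenCols hN).2 ((hsuper j₀).antisymm (not_lt.1 hj₀))⟩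
  refine ⟨_, hD, hsuper, _, (mem_nonGenCols hN).1 (max'_mem _ hne), fun j hj => ?_, rfl⟩
  refine (hsuper j).lt_of_ne fun h => ?_
  exact hj.not_ge (le_max' _ _ ((mem_nonGenCols hN).2 h))

namespace CloselyRelated

variable (h : CloselyRelated N D E) (hN : 0 < N)
include h hN

lemma isSkewDiagram : IsSkewDiagram E := by
  obtain ⟨hD, -, j, hj, -, rfl⟩ := h
  exact hD.isSkewDiagram_surgery hN hj

lemma sharedCard_eq_or_lt (k : ℤ) : sharedCard E k = sharedCard D k ∨ sharedCard E k < 2 * N := by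
  obtain ⟨hD, -, j, hj, hmax, rfl⟩ := h
  rcases lt_trichotomy k j with hk | rfl | hk
  · exact Or.inl (hD.sharedCard_surgery_of_lt hN hj hk)
  · exact Or.inr ((hD.sharedCard_surgery_self_le hN hj).trans_lt (hmax _ (lt_add_one k)))
  · exact Or.inr ((sharedCard_surgery_of_gt hk).trans_lt (hmax _ (by omega)))

lemma isSuper : IsSuper N E := fun k =>
  (h.sharedCard_eq_or_lt hN k).elim (fun hk => hk ▸ h.2.1 k) le_of_lt

lemma card_nonGenCols_lt : #(nonGenCols N E) < #(nonGenCols N D) := by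
  have hsub : nonGenCols N E ⊆ nonGenCols N D := fun k hk => by
    rw [mem_nonGenCols hN] at hk ⊢
    exact (h.sharedCard_eq_or_lt hN k).elim (· ▸ hk) fun hlt => absurd hk hlt.ne
  obtain ⟨hD, -, j, hj, hmax, rfl⟩ := h
  refine card_lt_card ((ssubset_iff_of_subset hsub).2 ⟨j, (mem_nonGenCols hN).2 hj, ?_⟩)
  rw [mem_nonGenCols hN]
  exact ((hD.sharedCard_surgery_self_le hN hj).trans_lt (hmax _ (lt_add_one j))).ne

end CloselyRelated

lemma exists_reflTransGen_closelyRelated_isGeneric (hN : 0 < N) (hD : IsSkewDiagram D)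
    (hsuper : IsSuper N D) : ∃ E, ReflTransGen (CloselyRelated N) D E ∧ IsGeneric N E := by
  induction hn : #(nonGenCols N D) using Nat.strong_induction_on generalizing D with
  | _ n ih =>
    by_cases hg : IsGeneric N D
    · exact ⟨D, .refl, hg⟩
    obtain ⟨E, hE⟩ := exists_closelyRelated hN hD hsuper hg
    obtain ⟨F, hEF, hF⟩ :=
      ih _ (hn ▸ hE.card_nonGenCols_lt hN) (hE.isSkewDiagram hN) (hE.isSuper hN) rfl
    exact ⟨F, .head hE hEF, hF⟩

lemma IsGeneric.eq_of_reflTransGen_closelyRelated (hD : IsGeneric N D)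
    (h : ReflTransGen (CloselyRelated N) D E) : D = E :=
  h.cases_head.resolve_right fun ⟨_, hE, _⟩ => hD.not_closelyRelated hE

end CloselyRelated

theorem stmt17_general (N : ℕ) (hN : 1 ≤ N) (D : Finset (ℤ × ℤ)) (hD : IsSkewDiagram D)
    (hsuper : IsSuper N D) :
    ∃! E : Finset (ℤ × ℤ),
      Relation.ReflTransGen (CloselyRelated N) D E ∧ IsGeneric N E := by
  obtain ⟨E, hDE, hE⟩ := exists_reflTransGen_closelyRelated_isGeneric hN hD hsuper
  refine ⟨E, ⟨hDE, hE⟩, fun F ⟨hDF, hF⟩ => ?_⟩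
  rcases hDF.total_of_right_unique closelyRelated_rightUnique hDE with hFE | hEF
  · exact hF.eq_of_reflTransGen_closelyRelated hFE
  · exact (hE.eq_of_reflTransGen_closelyRelated hEF).symm

/-- Every non-generic super skew diagram is related to a unique generic super skew diagram. -/
theorem stmt17 (N : ℕ) (hN : 1 ≤ N) (D : Finset (ℤ × ℤ)) (hD : IsSkewDiagram D)
    (hsuper : IsSuper N D) (hng : ¬ IsGeneric N D) :
    ∃! E : Finset (ℤ × ℤ),
      Relation.ReflTransGen (CloselyRelated N) D E ∧ IsGeneric N E :=
  stmt17_general N hN D hD hsuper
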